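/- arXiv:2401.05192 — 2 statements merged into one kernel-verified Lean document; each statement's English description precedes it below -/
import Mathlib

section
/- Let K be a field with char(K) ≠ 2 containing i with i² = -1, and consider the matrices A = [[i,0],[0,-i]], B = [[0,1],[-1,0]], C = (1/(2u))·[[u²+1, u²-1],[u²-1, u²+1]] (for nonzero u ∈ K), D = I in SL₂(K). Then A B A⁻¹ B⁻¹ C D C⁻¹ D⁻¹ = -I. -/
/-!
`A` and `B` anticommute, so their commutator is `-I`; the commutator of `C` with `D = I`
is trivial as soon as `C` is invertible, and `det C = ((u² + 1)² - (u² - 1)²) / (2u)² = 1`.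
-/

open Matrix

section
variable {n R : Type*} [Fintype n] [DecidableEq n] [CommRing R]

theorem Matrix.commutator_eq_neg_one_of_mul_eq_neg_mul {A B : Matrix n n R}
    (hA : IsUnit A.det) (hB : IsUnit B.det) (hAB : A * B = -(B * A)) :
    A * B * A⁻¹ * B⁻¹ = -1 := by
  rw [hAB, neg_mul, neg_mul, mul_assoc B, mul_nonsing_inv A hA, mul_one,
    mul_nonsing_inv B hB]

theorem Matrix.commutator_one_right {C : Matrix n n R} (hC : IsUnit C.det) :
    C * 1 * C⁻¹ * 1⁻¹ = 1 := by
  rw [mul_one, inv_one, mul_one, mul_nonsing_inv C hC]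

end

theorem Matrix.fin_two_diag_neg_mul_antidiag {R : Type*} [CommRing R] (a b c : R) :
    !![a, 0; 0, -a] * !![0, b; c, 0] = -(!![0, b; c, 0] * !![a, 0; 0, -a]) := by
  simp [neg_of, mul_comm]

theorem Matrix.det_hyperbolic {K : Type*} [Field K] {u : K} (h2 : (2 : K) ≠ 0) (hu : u ≠ 0) :
    ((2 * u)⁻¹ • !![u ^ 2 + 1, u ^ 2 - 1; u ^ 2 - 1, u ^ 2 + 1] : Matrix (Fin 2) (Fin 2) K).det
      = 1 := by
  rw [det_smul, det_fin_two_of, Fintype.card_fin]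
  field_simp
  ring

/-- With `i² = -1` and `u ≠ 0`, the quadruple `A = [[i,0],[0,-i]]`, `B = [[0,1],[-1,0]]`,
`C = (1/(2u))·[[u²+1, u²-1],[u²-1, u²+1]]`, `D = I` satisfies
`A B A⁻¹ B⁻¹ C D C⁻¹ D⁻¹ = -I`. -/
theorem stmt_12 (K : Type*) [Field K] (hK : ringChar K ≠ 2) (i u : K)
    (hi : i ^ 2 = -1) (hu : u ≠ 0) (A B C D : Matrix (Fin 2) (Fin 2) K)
    (hA : A = !![i, 0; 0, -i]) (hB : B = !![0, 1; -1, 0])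
    (hC : C = (2 * u)⁻¹ • !![u ^ 2 + 1, u ^ 2 - 1; u ^ 2 - 1, u ^ 2 + 1])
    (hD : D = 1) :
    A * B * A⁻¹ * B⁻¹ * C * D * C⁻¹ * D⁻¹ = -1 := by
  have hdetA : A.det = 1 := by
    rw [hA, det_fin_two_of]
    linear_combination -hi
  have hdetB : B.det = 1 := by simp [hB, det_fin_two_of]
  have hAB : A * B * A⁻¹ * B⁻¹ = -1 :=
    commutator_eq_neg_one_of_mul_eq_neg_mul (by simp [hdetA]) (by simp [hdetB])
      (by rw [hA, hB]; exact fin_two_diag_neg_mul_antidiag i 1 (-1))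
  have hCD : C * D * C⁻¹ * D⁻¹ = 1 := by
    rw [hD]
    refine commutator_one_right ?_
    rw [hC, det_hyperbolic (Ring.two_ne_zero hK) hu]
    exact isUnit_one
  calc A * B * A⁻¹ * B⁻¹ * C * D * C⁻¹ * D⁻¹
      = (A * B * A⁻¹ * B⁻¹) * (C * D * C⁻¹ * D⁻¹) := by simp only [mul_assoc]
    _ = -1 := by rw [hAB, hCD, mul_one]
end

section
/- Let K be a field and suppose (A,B,C,D) ∈ SL₂(K)⁴ satisfies A B A⁻¹ B⁻¹ C D C⁻¹ D⁻¹ = -I. Let G ≤ PSL₂(K) be the subgroup generated by the images α, β, γ, δ of A, B, C, D. If char(K) ≠ 2, then G does not lift to SL₂(K); that is, there is no homomorphism φ : G → SL₂(K) whose composition with the projection π : SL₂(K) → PSL₂(K) is the identity on G. -/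
open Matrix
open scoped MatrixGroups

instance : Fact (Even (Fintype.card (Fin 2))) := ⟨by simp⟩

/-- The natural projection `SL₂(K) → PSL₂(K)`. -/
def projSL (K : Type*) [Field K] : SL(2, K) →* PSL(2, K) :=
  QuotientGroup.mk' (Subgroup.center (SL(2, K)))

lemma aux_word_central {G : Type*} [Group G] (A B C D zA zB zC zD : G)
    (hA : ∀ x, zA * x = x * zA) (hB : ∀ x, zB * x = x * zB)
    (hC : ∀ x, zC * x = x * zC) (hD : ∀ x, zD * x = x * zD) :
    (A*zA)*(B*zB)*(A*zA)⁻¹*(B*zB)⁻¹*(C*zC)*(D*zD)*(C*zC)⁻¹*(D*zD)⁻¹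
      = A*B*A⁻¹*B⁻¹*C*D*C⁻¹*D⁻¹ := by
  have hA' : ∀ x : G, zA⁻¹ * x = x * zA⁻¹ := fun x => by
    have := congrArg (·⁻¹) (hA x⁻¹); simpa [eq_comm] using this
  have hB' : ∀ x : G, zB⁻¹ * x = x * zB⁻¹ := fun x => by
    have := congrArg (·⁻¹) (hB x⁻¹); simpa [eq_comm] using this
  have hC' : ∀ x : G, zC⁻¹ * x = x * zC⁻¹ := fun x => by
    have := congrArg (·⁻¹) (hC x⁻¹); simpa [eq_comm] using this
  have hD' : ∀ x : G, zD⁻¹ * x = x * zD⁻¹ := fun x => by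
    have := congrArg (·⁻¹) (hD x⁻¹); simpa [eq_comm] using this
  simp only [_root_.mul_inv_rev, mul_assoc]
  rw [hA, hB, hA', hB', hC, hD, hC', hD']
  simp only [mul_assoc]
  rw [hC']
  simp only [mul_assoc, inv_mul_cancel_left]
  rw [hC]
  simp only [mul_assoc, inv_mul_cancel_left, mul_inv_cancel_left]
  rw [hA']
  simp [mul_assoc]

/-- If `A B A⁻¹ B⁻¹ C D C⁻¹ D⁻¹ = -I` in `SL₂(K)` and `char K ≠ 2`, then the subgroup of
`PSL₂(K)` generated by the images of `A, B, C, D` does not lift to `SL₂(K)`. -/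
theorem stmt_13 (K : Type*) [Field K] (hK : ringChar K ≠ 2) (A B C D : SL(2, K))
    (h : A * B * A⁻¹ * B⁻¹ * C * D * C⁻¹ * D⁻¹ = -1) :
    ¬ ∃ φ : (Subgroup.closure {projSL K A, projSL K B, projSL K C, projSL K D} :
        Subgroup (PSL(2, K))) →* SL(2, K),
      ∀ x, projSL K (φ x) = (x : PSL(2, K)) := by
  rintro ⟨φ, hφ⟩
  have memA : projSL K A ∈ Subgroup.closure {projSL K A, projSL K B, projSL K C, projSL K D} :=
    Subgroup.subset_closure (by simp)
  have memB : projSL K B ∈ Subgroup.closure {projSL K A, projSL K B, projSL K C, projSL K D} :=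
    Subgroup.subset_closure (by simp)
  have memC : projSL K C ∈ Subgroup.closure {projSL K A, projSL K B, projSL K C, projSL K D} :=
    Subgroup.subset_closure (by simp)
  have memD : projSL K D ∈ Subgroup.closure {projSL K A, projSL K B, projSL K C, projSL K D} :=
    Subgroup.subset_closure (by simp)
  set a := (⟨projSL K A, memA⟩ : Subgroup.closure {projSL K A, projSL K B, projSL K C, projSL K D}) with ha
  set b := (⟨projSL K B, memB⟩ : Subgroup.closure {projSL K A, projSL K B, projSL K C, projSL K D}) with hb
  set c := (⟨projSL K C, memC⟩ : Subgroup.closure {projSL K A, projSL K B, projSL K C, projSL K D}) with hc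
  set d := (⟨projSL K D, memD⟩ : Subgroup.closure {projSL K A, projSL K B, projSL K C, projSL K D}) with hd
  -- -1 is central
  have hneg : (-1 : SL(2,K)) ∈ Subgroup.center (SL(2,K)) :=
    Subgroup.mem_center_iff.mpr fun g => by rw [mul_neg_one, neg_one_mul]
  -- the word in the closure subgroup is 1
  have hw : a * b * a⁻¹ * b⁻¹ * c * d * c⁻¹ * d⁻¹ = 1 := by
    apply Subtype.ext
    show projSL K A * projSL K B * (projSL K A)⁻¹ * (projSL K B)⁻¹ *
      projSL K C * projSL K D * (projSL K C)⁻¹ * (projSL K D)⁻¹ = 1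
    rw [← map_inv, ← map_inv, ← map_inv, ← map_inv, ← _root_.map_mul, ← _root_.map_mul,
      ← _root_.map_mul, ← _root_.map_mul, ← _root_.map_mul, ← _root_.map_mul, ← _root_.map_mul, h]
    exact (QuotientGroup.eq_one_iff _).mpr hneg
  -- each φ of a generator is the generator times a central element
  obtain ⟨zA, hzA, hzA'⟩ := (QuotientGroup.mk'_eq_mk' _).mp (hφ a)
  obtain ⟨zB, hzB, hzB'⟩ := (QuotientGroup.mk'_eq_mk' _).mp (hφ b)
  obtain ⟨zC, hzC, hzC'⟩ := (QuotientGroup.mk'_eq_mk' _).mp (hφ c)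
  obtain ⟨zD, hzD, hzD'⟩ := (QuotientGroup.mk'_eq_mk' _).mp (hφ d)
  have eA : φ a = A * zA⁻¹ := eq_mul_inv_iff_mul_eq.mpr hzA'
  have eB : φ b = B * zB⁻¹ := eq_mul_inv_iff_mul_eq.mpr hzB'
  have eC : φ c = C * zC⁻¹ := eq_mul_inv_iff_mul_eq.mpr hzC'
  have eD : φ d = D * zD⁻¹ := eq_mul_inv_iff_mul_eq.mpr hzD'
  have key : φ a * φ b * (φ a)⁻¹ * (φ b)⁻¹ * φ c * φ d * (φ c)⁻¹ * (φ d)⁻¹ = -1 := by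
    rw [eA, eB, eC, eD,
      aux_word_central A B C D zA⁻¹ zB⁻¹ zC⁻¹ zD⁻¹
        (fun x => (Subgroup.mem_center_iff.mp (inv_mem hzA) x).symm)
        (fun x => (Subgroup.mem_center_iff.mp (inv_mem hzB) x).symm)
        (fun x => (Subgroup.mem_center_iff.mp (inv_mem hzC) x).symm)
        (fun x => (Subgroup.mem_center_iff.mp (inv_mem hzD) x).symm), h]
  have key2 : φ a * φ b * (φ a)⁻¹ * (φ b)⁻¹ * φ c * φ d * (φ c)⁻¹ * (φ d)⁻¹ = 1 := by
    rw [← _root_.map_mul, ← map_inv, ← _root_.map_mul, ← map_inv, ← _root_.map_mul,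
      ← _root_.map_mul, ← _root_.map_mul, ← map_inv, ← _root_.map_mul, ← map_inv,
      ← _root_.map_mul, hw, _root_.map_one]
  rw [key2] at key
  -- so 1 = -1 in SL(2,K), contradiction
  have : (1 : K) = -1 := by
    have := congrArg (fun g : SL(2,K) => (g : Matrix (Fin 2) (Fin 2) K) 0 0) key
    simpa using this
  exact Ring.neg_one_ne_one_of_char_ne_two hK this.symm
end
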